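/- Let M be a multiline queue, let i be a column, and let t ≤ r be rows such that L_M(s,i) > 0 for all t ≤ s ≤ r. Then the labels weakly increase going down the column: L_M(r,i) ≤ L_M(r−1,i) ≤ ⋯ ≤ L_M(t,i). -/

import Mathlib

open scoped BigOperators

namespace MultilineQueue

/-! ### Basic combinatorial utilities -/

/-- The list of columns `1, …, n`. -/
def colsList (n : ℕ) : List ℕ := (List.range n).map (· + 1)

/-- Insert `x` into a weakly decreasing list, keeping it weakly decreasing. -/
def insDesc (x : ℕ) : List ℕ → List ℕ
  | [] => [x]
  | y :: ys => if y ≤ x then x :: y :: ys else y :: insDesc x ys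

/-- Sort a list of naturals in weakly decreasing order. -/
def sortDesc : List ℕ → List ℕ
  | [] => []
  | x :: xs => insDesc x (sortDesc xs)

/-- The positive parts of a weak composition `α` (supported on columns `1,…,n`). -/
def compParts (n : ℕ) (α : ℕ → ℕ) : List ℕ :=
  ((colsList n).map α).filter (fun x => 0 < x)

/-- `sort(α)`: the partition obtained by sorting the positive parts of `α` decreasingly. -/
def sortComp (n : ℕ) (α : ℕ → ℕ) : List ℕ := sortDesc (compParts n α)

/-- The conjugate partition: `(conj l).get j = #{i : l i ≥ j+1}`, for `j = 0,…,l₁-1`. -/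
def conj (l : List ℕ) : List ℕ :=
  (List.range (l.headD 0)).map (fun j => (l.filter (fun x => j < x)).length)

/-- A list is a partition: weakly decreasing with positive parts. -/
def IsPartitionL (l : List ℕ) : Prop := l.Pairwise (· ≥ ·) ∧ ∀ x ∈ l, 0 < x

/-- Dominance order on partitions: `mu ⊴ lam` (same size, partial sums dominated). -/
def Dominates (lam mu : List ℕ) : Prop :=
  mu.sum = lam.sum ∧ ∀ k, (mu.take k).sum ≤ (lam.take k).sum

/-- A weak composition with `n` parts: a function `ℕ → ℕ` supported on `{1,…,n}`. -/
def IsWeakComp (n : ℕ) (α : ℕ → ℕ) : Prop := ∀ j, (j = 0 ∨ n < j) → α j = 0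

/-- The simple transposition `s_i` acting on a weak composition, exchanging
the entries at positions `i` and `i+1`. -/
def swapComp (i : ℕ) (α : ℕ → ℕ) : ℕ → ℕ :=
  fun j => if j = i then α (i + 1) else if j = i + 1 then α i else α j

/-- A strong composition `τ` (a list), regarded as a weak composition with `n`
parts by appending zeros. -/
def padComp (n : ℕ) (τ : List ℕ) : ℕ → ℕ :=
  fun j => if 1 ≤ j ∧ j ≤ n then τ.getD (j - 1) 0 else 0

/-! ### Bracket matching between two rows -/

/-- Classical bracket matching between a bottom row `a` (closing letters) and a top
row `b` (opening letters), reading columns `1,…,n` left to right, and within each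
column the top letter before the bottom letter.  Returns the tuple
`(stack of unmatched opening positions (head = most recent),
  matched positions of `b`, matched positions of `a`,
  unmatched positions of `a` in left-to-right order)`. -/
def scan (n : ℕ) (a b : Finset ℕ) : List ℕ × Finset ℕ × Finset ℕ × List ℕ :=
  (colsList n).foldl
    (fun st j =>
      let stk : List ℕ := if j ∈ b then j :: st.1 else st.1
      if j ∈ a then
        match stk with
        | [] => ([], st.2.1, st.2.2.1, st.2.2.2 ++ [j])
        | x :: rest => (rest, insert x st.2.1, insert j st.2.2.1, st.2.2.2)
      else (stk, st.2.1, st.2.2.1, st.2.2.2))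
    ([], ∅, ∅, [])

/-- `θ(a⊗b)`: the set of elements of the bottom row `a` classically matched when the
top row `b` is bracketed against it. -/
def theta (n : ℕ) (a b : Finset ℕ) : Finset ℕ := (scan n a b).2.2.1

/-- The set of elements of the top row `b` that are classically matched. -/
def matchedTop (n : ℕ) (a b : Finset ℕ) : Finset ℕ := (scan n a b).2.1

/-- `R(a,b)`: cylindrical bracket matching; the unmatched opening parentheses wrap
around and match the leftmost unmatched closing parentheses. -/
def Rcyl (n : ℕ) (a b : Finset ℕ) : Finset ℕ :=
  (scan n a b).2.2.1 ∪ ((scan n a b).2.2.2.take (scan n a b).1.length).toFinset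

/-- `θ(b₁⊗…⊗b_L)`, extended recursively:
`θ(b₁⊗…⊗b_L) = θ(b₁ ⊗ θ(b₂⊗…⊗b_L))`. -/
def thetaTup (n : ℕ) : List (Finset ℕ) → Finset ℕ
  | [] => ∅
  | [b] => b
  | b :: c :: rest => theta n b (thetaTup n (c :: rest))

/-- `R(b₁,…,b_L)`, extended recursively: `R(b₁,…,b_L) = R(b₁, R(b₂,…,b_L))`. -/
def Rtup (n : ℕ) : List (Finset ℕ) → Finset ℕ
  | [] => ∅
  | [b] => b
  | b :: c :: rest => Rcyl n b (Rtup n (c :: rest))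

/-! ### Multiline queues, the FM labelling, type and major index

A multiline queue (or generalized multiline queue) is recorded as a list of
rows, bottom row first; each row is the set of columns containing a ball. -/

/-- The FM label of the ball of the bottom row of `rows` in column `c`
(`0` if there is no ball there): by the corner transfer matrix description of the
Ferrari–Martin algorithm, the bottom-row balls of label `≥ k` are exactly
`R(B₁,…,B_k)`, so the label is the largest such `k`. -/
def botLabel (n : ℕ) (rows : List (Finset ℕ)) (c : ℕ) : ℕ :=
  (Finset.range (rows.length + 1)).sup
    (fun k => if c ∈ Rtup n (rows.take k) then k else 0)

/-- `type(M)`: the weak composition of FM labels on the bottom row. -/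
def typeOf (n : ℕ) (rows : List (Finset ℕ)) : ℕ → ℕ := botLabel n rows

/-- `L_M(r,c)`: the FM label of the ball at row `r` (1-indexed from the bottom),
column `c`; `0` if the site is empty. The labels of row `r` only depend on
rows `r, r+1, …`, for which `c` sits on the bottom row; a strand of length `h`
through row `r` truncates to a strand of length `h − (r−1)` there. -/
def labelAt (n : ℕ) (rows : List (Finset ℕ)) (r c : ℕ) : ℕ :=
  if 1 ≤ r ∧ 0 < botLabel n (rows.drop (r - 1)) c then
    botLabel n (rows.drop (r - 1)) c + (r - 1)
  else 0

/-- `strtype(M)`: the strong type, i.e. the type with its zero entries deleted. -/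
def strtypeOf (n : ℕ) (rows : List (Finset ℕ)) : List ℕ :=
  ((colsList n).map (typeOf n rows)).filter (fun x => x ≠ 0)

/-- `I_k(M)`: the set of columns whose bottom-row label is exactly `k`. -/
def Iset (n : ℕ) (rows : List (Finset ℕ)) (k : ℕ) : Finset ℕ :=
  (Finset.Icc 1 n).filter (fun c => typeOf n rows c = k)

/-- The set of balls of row `r` (1-indexed) of `M` having label `≥ ℓ`. -/
def Sset (n : ℕ) (rows : List (Finset ℕ)) (r ℓ : ℕ) : Finset ℕ :=
  if ℓ ≤ rows.length then Rtup n ((rows.drop (r - 1)).take (ℓ + 1 - r)) else ∅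

/-- The number of balls of row `r` with label `≥ ℓ` whose FM pairing into row
`r−1` wraps around the cylinder: these are precisely the ones that cannot be
matched classically. -/
def wrapCount (n : ℕ) (rows : List (Finset ℕ)) (r ℓ : ℕ) : ℕ :=
  (Sset n rows r ℓ).card - (theta n (rows.getD (r - 2) ∅) (Sset n rows r ℓ)).card

/-- `m_{ℓ,r}`: the number of balls labelled exactly `ℓ` in row `r` whose FM pairing
into row `r−1` wraps. -/
def mWrap (n : ℕ) (rows : List (Finset ℕ)) (ℓ r : ℕ) : ℕ :=
  wrapCount n rows r ℓ - wrapCount n rows r (ℓ + 1)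

/-- The major index `maj(M) = Σ_{2≤ℓ≤L} Σ_{2≤r≤ℓ} m_{ℓ,r}·(ℓ−r+1)`. -/
def maj (n : ℕ) (rows : List (Finset ℕ)) : ℕ :=
  ∑ ℓ ∈ Finset.Icc 2 rows.length, ∑ r ∈ Finset.Icc 2 ℓ, mWrap n rows ℓ r * (ℓ - r + 1)

/-- `M` is a multiline queue of shape `(lam, n)`: it has `lam₁` rows, all contained
in `{1,…,n}`, and row `j` has `lam'_j` balls. -/
def IsMLQ (n : ℕ) (lam : List ℕ) (rows : List (Finset ℕ)) : Prop :=
  rows.length = lam.headD 0 ∧ (∀ B ∈ rows, B ⊆ Finset.Icc 1 n) ∧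
    ∀ j, j < rows.length → (rows.getD j ∅).card = (lam.filter (fun x => j < x)).length

/-- The unique straight (nonwrapping, vertical-strand) multiline queue of type `α`:
its `j`-th row is `{c : α c ≥ j}`. -/
def straight (n : ℕ) (α : ℕ → ℕ) : List (Finset ℕ) :=
  (List.range ((sortComp n α).headD 0)).map
    (fun j => (Finset.Icc 1 n).filter (fun c => j + 1 ≤ α c))

/-! ### Row dropping operators and the collapsing map -/

/-- The saturated row dropping operator `e_i^{↓*}` (for `1 ≤ i < rows.length`):
the pair of rows `(B_i, B_{i+1})` is replaced by `(B_i ∪ u, m)`, where `m` and `u`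
are the matched, resp. unmatched, elements of `B_{i+1}` against `B_i`. -/
def eStar (n : ℕ) (i : ℕ) (rows : List (Finset ℕ)) : List (Finset ℕ) :=
  if 1 ≤ i ∧ i < rows.length then
    let a := rows.getD (i - 1) ∅
    let b := rows.getD i ∅
    let m := matchedTop n a b
    (rows.set (i - 1) (a ∪ (b \ m))).set i m
  else rows

/-- `e^{↓*}_{[b,1]} = e^{↓*}_1 ∘ e^{↓*}_2 ∘ ⋯ ∘ e^{↓*}_b` (applying `e^{↓*}_b` first). -/
def eStarSeq (n b : ℕ) (rows : List (Finset ℕ)) : List (Finset ℕ) :=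
  (List.range b).foldl (fun r k => eStar n (b - k) r) rows

/-- The collapsing operator
`ρ_N = e^{↓*}_{[L−1,1]} ∘ ⋯ ∘ e^{↓*}_{[2,1]} ∘ e^{↓*}_{[1,1]}`; the resulting
empty rows at the top are discarded, so that the result is an honest nonwrapping
multiline queue of its own (smaller) shape. -/
def rhoN (n : ℕ) (rows : List (Finset ℕ)) : List (Finset ℕ) :=
  ((List.range (rows.length - 1)).foldl (fun r i => eStarSeq n (i + 1) r) rows).filter
    (fun B => B ≠ ∅)

/-- `π^{(k)}(M)`: the bottom `k` rows of `M`. -/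
def trunc (rows : List (Finset ℕ)) (k : ℕ) : List (Finset ℕ) := rows.take k

/-- `ρ^{(k)}(M) = ρ_N(π^{(k)}(M))`. -/
def rhoTrunc (n : ℕ) (rows : List (Finset ℕ)) (k : ℕ) : List (Finset ℕ) :=
  rhoN n (trunc rows k)

/-- The intermediate stages `M₁ = M, M₂ = e^{↓*}_{[1,1]}(M₁), …, M_L` of the
collapsing procedure. -/
def stages (n : ℕ) (rows : List (Finset ℕ)) : List (List (Finset ℕ)) :=
  (List.range (rows.length - 1)).scanl (fun r i => eStarSeq n (i + 1) r) rows

/-- The recording tableau `ρ_Q(M)`, as a list of rows (bottom row first):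
row `j+1` receives `|row_{j+1}(M_{j+1})|` boxes with entry `j+1`, and then, at each
later stage `s+1`, `|row_{j+1}(M_{s+1})| − |row_{j+1}(M_s)|` boxes with entry `s+1`. -/
def rhoQ (n : ℕ) (rows : List (Finset ℕ)) : List (List ℕ) :=
  let st := stages n rows
  let L := rows.length
  let size : ℕ → ℕ → ℕ := fun j s => ((st.getD s []).getD j ∅).card
  ((List.range L).map (fun j =>
    List.replicate (size j j) (j + 1) ++
      (((List.range L).filter (fun s => j < s)).map
        (fun s => List.replicate (size j s - size j (s - 1)) (s + 1))).flatten)).filter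
    (fun row => row ≠ [])

/-! ### Column crystal operators -/

/-- Bracket the letters `i` (closing) against `i+1` (opening) in the row word of
`M` (rows top to bottom, right to left within each row).  Returns
`(stack of list-indices of rows with unmatched balls in column i+1 (head = most recent),
  list-indices of rows with unmatched balls in column i, in word order)`. -/
def colScan (n : ℕ) (i : ℕ) (rows : List (Finset ℕ)) : List ℕ × List ℕ :=
  ((List.range rows.length).reverse).foldl
    (fun st r =>
      let stk : List ℕ := if i + 1 ∈ rows.getD r ∅ then r :: st.1 else st.1
      if i ∈ rows.getD r ∅ then
        match stk with
        | [] => ([], st.2 ++ [r])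
        | _ :: rest => (rest, st.2)
      else (stk, st.2))
    ([], [])

/-- The column raising operator `e_i^←`: moves the ball corresponding to the
leftmost unmatched `i+1` of `θ_i(rw(M))` from column `i+1` to column `i`
(identity if there is none). -/
def eCol (n : ℕ) (i : ℕ) (rows : List (Finset ℕ)) : List (Finset ℕ) :=
  match (colScan n i rows).1.getLast? with
  | none => rows
  | some r => rows.set r (insert i ((rows.getD r ∅).erase (i + 1)))

/-- The column lowering operator `f_i^→`: moves the ball corresponding to the
rightmost unmatched `i` of `θ_i(rw(M))` from column `i` to column `i+1`
(identity if there is none). -/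
def fCol (n : ℕ) (i : ℕ) (rows : List (Finset ℕ)) : List (Finset ℕ) :=
  match (colScan n i rows).2.getLast? with
  | none => rows
  | some r => rows.set r (insert (i + 1) ((rows.getD r ∅).erase i))

/-- The 1-indexed row of the ball moved by `e_i^←`, if any. -/
def movedRowE (n : ℕ) (i : ℕ) (rows : List (Finset ℕ)) : Option ℕ :=
  ((colScan n i rows).1.getLast?).map (· + 1)

/-- `M` is `e_i^←`-full: `type(M)_i < type(M)_{i+1}` and `θ_i(rw(M))` contains
exactly one unmatched `i+1`. -/
def isEFull (n : ℕ) (i : ℕ) (rows : List (Finset ℕ)) : Prop :=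
  typeOf n rows i < typeOf n rows (i + 1) ∧ (colScan n i rows).1.length = 1

/-- `M` is `f_i^→`-full: `f_i^→(M)` is `e_i^←`-full. -/
def isFFull (n : ℕ) (i : ℕ) (rows : List (Finset ℕ)) : Prop :=
  isEFull n i (fCol n i rows)

/-- The bottom row `p` of the `i`-active region `act_i(M)`, given the row `r` of the
moved ball and its label `ℓ`: the maximal `p ≤ r` with `L_M(p−1,i) = 0` or
`L_M(p−1,i) ≥ ℓ` (noting `L_M(0,i) = 0`, so `p = 1` always qualifies). -/
def actLow (n : ℕ) (rows : List (Finset ℕ)) (i r ℓ : ℕ) : ℕ :=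
  ((Finset.Icc 1 r).filter
    (fun p => labelAt n rows (p - 1) i = 0 ∨ ℓ ≤ labelAt n rows (p - 1) i)).sup id

/-! ### FM pairings and strands -/

/-- The first element of `s` weakly to the right of `c`, cyclically. -/
def cycNext (s : Finset ℕ) (c : ℕ) : Option ℕ :=
  if h : (s.filter (fun x => c ≤ x)).Nonempty then some ((s.filter (fun x => c ≤ x)).min' h)
  else if h2 : s.Nonempty then some (s.min' h2) else none

/-- Stable insertion into a list sorted weakly decreasingly by `key`. -/
def insKey (key : ℕ → ℕ) (x : ℕ) : List ℕ → List ℕ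
  | [] => [x]
  | y :: ys => if key y ≤ key x then x :: y :: ys else y :: insKey key x ys

/-- Stable sort, weakly decreasing by `key`. -/
def sortKeyDesc (key : ℕ → ℕ) : List ℕ → List ℕ
  | [] => []
  | x :: xs => insKey key x (sortKeyDesc key xs)

/-- The FM pairings from row `r+1` to row `r` (1-indexed `r ≥ 1`): the balls of row
`r+1` are processed in decreasing order of label (left to right among equal labels),
each pairing to the first unpaired ball of row `r` weakly to its right, cyclically.
Returns the list of pairs `(source column in row r+1, target column in row r)`. -/
def pairsAt (n : ℕ) (rows : List (Finset ℕ)) (r : ℕ) : List (ℕ × ℕ) :=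
  let top := rows.getD r ∅
  let bot := rows.getD (r - 1) ∅
  let order := sortKeyDesc (fun c => labelAt n rows (r + 1) c)
    ((colsList n).filter (fun c => decide (c ∈ top)))
  (order.foldl (fun (st : Finset ℕ × List (ℕ × ℕ)) c =>
      match cycNext st.1 c with
      | some t => (st.1.erase t, st.2 ++ [(c, t)])
      | none => st) (bot, [])).2

/-- The column of the ball of row `r` to which the ball of row `r+1` in column `c`
is paired by the FM algorithm. -/
def pairedTo (n : ℕ) (rows : List (Finset ℕ)) (r c : ℕ) : Option ℕ :=
  ((pairsAt n rows r).find? (fun p => decide (p.1 = c))).map (·.2)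

/-- A strand of `M`: a nonempty sequence of columns `s = [c₁, …, c_h]` with the ball
`c_t` in row `t`, the ball `c_{t+1}` paired to `c_t` for each `t`, and the top ball
`c_h` not paired to from row `h+1`. -/
def IsStrand (n : ℕ) (rows : List (Finset ℕ)) (s : List ℕ) : Prop :=
  s ≠ [] ∧
  (∀ t, t < s.length → s.getD t 0 ∈ rows.getD t ∅) ∧
  (∀ t, t + 1 < s.length → pairedTo n rows (t + 1) (s.getD (t + 1) 0) = some (s.getD t 0)) ∧
  (∀ c, pairedTo n rows s.length c ≠ some (s.getD (s.length - 1) 0))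

/-! ### Semistandard Young tableaux and the charge statistic -/

/-- `Q` is a semistandard Young tableau of shape `sh` and content `ct`, recorded as a
list of rows (bottom row first, French convention), each row a list of entries:
rows weakly increase, columns strictly increase from bottom to top, and for every
`m ≥ 1` the entry `m` occurs `ct_{m}` times. -/
def IsSSYT (Q : List (List ℕ)) (sh ct : List ℕ) : Prop :=
  Q.map List.length = sh ∧
  (∀ row ∈ Q, row.Pairwise (· ≤ ·)) ∧
  (∀ row ∈ Q, ∀ x ∈ row, 0 < x) ∧
  (∀ j k, j + 1 < Q.length → k < (Q.getD (j + 1) []).length →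
      (Q.getD j []).getD k 0 < (Q.getD (j + 1) []).getD k 0) ∧
  (∀ m, 0 < m → ((Q.flatten).filter (fun x => x = m)).length = ct.getD (m - 1) 0)

/-- Find the rightmost occurrence of the value `v` at a position `≤ pos` in the
indexed word `l`; if none, wrap around (cyclically) and take the rightmost
occurrence of `v` overall.  Returns the position together with a flag recording
whether the search wrapped. -/
def chargeFind (l : List (ℕ × ℕ)) (v pos : ℕ) : Option (ℕ × Bool) :=
  match (l.filter (fun p => decide (p.2 = v ∧ p.1 ≤ pos))).getLast? with
  | some p => some (p.1, false)
  | none =>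
    match (l.filter (fun p => decide (p.2 = v))).getLast? with
    | some p => some (p.1, true)
    | none => none

/-- Extract (the rest of) one standard subword, consisting of the letters
`v, v+1, v+2, …`, scanning right to left cyclically from position `pos`; `idx` is
the charge index of the previously extracted letter, incremented whenever the next
letter is found to its right (i.e. when the leftward search wraps around), kept
otherwise.  Returns the total charge contribution of the extracted letters
together with the remaining word. -/
def extractCharge : ℕ → List (ℕ × ℕ) → ℕ → ℕ → ℕ → ℕ × List (ℕ × ℕ)
  | 0, l, _, _, _ => (0, l)
  | fuel + 1, l, v, pos, idx =>
    match chargeFind l v pos with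
    | none => (0, l)
    | some pw =>
      let idx' := if pw.2 then idx + 1 else idx
      let r := extractCharge fuel (l.filter (fun q => decide (q.1 ≠ pw.1))) (v + 1)
        (pw.1 - 1) idx'
      (idx' + r.1, r.2)

/-- The Lascoux–Schützenberger charge of an indexed word: repeatedly extract a
standard subword (starting from the rightmost `1`, whose index is `0`) and add up
the charge contributions. -/
def chargeWordAux : ℕ → List (ℕ × ℕ) → ℕ
  | 0, _ => 0
  | fuel + 1, l =>
    match chargeFind l 1 l.length with
    | none => 0
    | some pw =>
      let r := extractCharge l.length (l.filter (fun q => decide (q.1 ≠ pw.1))) 2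
        (pw.1 - 1) 0
      r.1 + chargeWordAux fuel r.2

/-- The charge of a word. -/
def chargeWord (w : List ℕ) : ℕ := chargeWordAux w.length ((List.range w.length).zip w)

/-- The charge of a tableau: the charge of its reading word (rows read top to
bottom, left to right within each row). -/
def tabCharge (Q : List (List ℕ)) : ℕ := chargeWord Q.reverse.flatten

/-! ### Polynomials -/

/-- The content monomial `x^M = Π_j Π_{c ∈ B_j} x_c`, with coefficients in `ℤ[q]`. -/
noncomputable def xM (n : ℕ) (rows : List (Finset ℕ)) :
    MvPolynomial ℕ (Polynomial ℤ) :=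
  (rows.map (fun B => ∏ c ∈ B, (MvPolynomial.X c : MvPolynomial ℕ (Polynomial ℤ)))).prod

/-- `q^k` as a coefficient. -/
noncomputable def qpow (k : ℕ) : Polynomial ℤ := Polynomial.X ^ k

/-- The `t = 0` ASEP polynomial `f_α(X;q,0) = Σ_{M ∈ MLQ(α)} q^{maj(M)} x^M`. -/
noncomputable def fASEP (n : ℕ) (α : ℕ → ℕ) : MvPolynomial ℕ (Polynomial ℤ) :=
  ∑ᶠ (rows : List (Finset ℕ))
    (_ : IsMLQ n (sortComp n α) rows ∧ typeOf n rows = α),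
    MvPolynomial.C (qpow (maj n rows)) * xM n rows

/-- The Demazure atom `𝒜_β(X) = Σ_{M ∈ NMLQ(β)} x^M`. -/
noncomputable def atom (n : ℕ) (β : ℕ → ℕ) : MvPolynomial ℕ (Polynomial ℤ) :=
  ∑ᶠ (rows : List (Finset ℕ))
    (_ : IsMLQ n (sortComp n β) rows ∧ maj n rows = 0 ∧ typeOf n rows = β),
    xM n rows

/-- The `t = 0` quasisymmetric Macdonald polynomial
`G_γ(X;q,0) = Σ_{M ∈ SMLQ(γ)} q^{maj(M)} x^M`. -/
noncomputable def Gqsym (n : ℕ) (γ : List ℕ) : MvPolynomial ℕ (Polynomial ℤ) :=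
  ∑ᶠ (rows : List (Finset ℕ))
    (_ : IsMLQ n (sortDesc γ) rows ∧ strtypeOf n rows = γ),
    MvPolynomial.C (qpow (maj n rows)) * xM n rows

/-- The quasisymmetric Schur polynomial `QS_τ(X) = Σ_{M ∈ SNMLQ(τ)} x^M`. -/
noncomputable def QSpoly (n : ℕ) (τ : List ℕ) : MvPolynomial ℕ (Polynomial ℤ) :=
  ∑ᶠ (rows : List (Finset ℕ))
    (_ : IsMLQ n (sortDesc τ) rows ∧ maj n rows = 0 ∧ strtypeOf n rows = τ),
    xM n rows

/-- The nonsymmetric Kostka–Foulkes polynomial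
`K_{α,β}(q) = Σ_Q q^{charge(Q)}`, the sum over the semistandard Young tableaux `Q`
of shape `sort(β)'` and content `sort(α)'` such that `type(ρ^{-1}(M_β, Q)) = α`,
the preimage being expressed via the collapsing bijection `ρ = (ρ_N, ρ_Q)`. -/
noncomputable def Kpoly (n : ℕ) (α β : ℕ → ℕ) : Polynomial ℤ :=
  ∑ᶠ (Q : List (List ℕ))
    (_ : IsSSYT Q (conj (sortComp n β)) (conj (sortComp n α)) ∧
      ∃ rows : List (Finset ℕ), IsMLQ n (sortComp n α) rows ∧
        rhoN n rows = straight n β ∧ rhoQ n rows = Q ∧ typeOf n rows = α),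
    qpow (tabCharge Q)

/-- The quasisymmetric Kostka–Foulkes polynomial
`K_{γ,τ}(q) = Σ_Q q^{charge(Q)}`, the sum over the semistandard Young tableaux `Q`
of shape `sort(τ)'` and content `sort(γ)'` such that `strtype(ρ^{-1}(M_τ, Q)) = γ`. -/
noncomputable def KpolyQ (n : ℕ) (γ τ : List ℕ) : Polynomial ℤ :=
  ∑ᶠ (Q : List (List ℕ))
    (_ : IsSSYT Q (conj (sortDesc τ)) (conj (sortDesc γ)) ∧
      ∃ rows : List (Finset ℕ), IsMLQ n (sortDesc γ) rows ∧
        rhoN n rows = straight n (padComp n τ) ∧ rhoQ n rows = Q ∧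
        strtypeOf n rows = γ),
    qpow (tabCharge Q)


/-! ### Auxiliary lemmas for Statement 15 -/

private def step (a b : Finset ℕ) :
    (List ℕ × Finset ℕ × Finset ℕ × List ℕ) → ℕ → (List ℕ × Finset ℕ × Finset ℕ × List ℕ) :=
  fun st j =>
    let stk : List ℕ := if j ∈ b then j :: st.1 else st.1
    if j ∈ a then
      match stk with
      | [] => ([], st.2.1, st.2.2.1, st.2.2.2 ++ [j])
      | x :: rest => (rest, insert x st.2.1, insert j st.2.2.1, st.2.2.2)
    else (stk, st.2.1, st.2.2.1, st.2.2.2)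

private lemma scan_eq (n : ℕ) (a b : Finset ℕ) :
    scan n a b = (colsList n).foldl (step a b) ([], ∅, ∅, []) := rfl

private lemma step_mono (a b : Finset ℕ) (st : List ℕ × Finset ℕ × Finset ℕ × List ℕ)
    (j i : ℕ) (h : i ∈ st.2.2.1) : i ∈ (step a b st j).2.2.1 := by
  obtain ⟨s1, s2, s3, s4⟩ := st
  simp only [step] at *
  by_cases hb : j ∈ b <;> by_cases ha : j ∈ a <;>
    simp only [hb, ha, if_true, if_false]
  · exact Finset.mem_insert_of_mem h
  · exact h
  · cases s1 with
    | nil => exact h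
    | cons x rest => exact Finset.mem_insert_of_mem h
  · exact h

private lemma foldl_mono (a b : Finset ℕ) (L : List ℕ)
    (st : List ℕ × Finset ℕ × Finset ℕ × List ℕ) (i : ℕ) (h : i ∈ st.2.2.1) :
    i ∈ (L.foldl (step a b) st).2.2.1 := by
  induction L generalizing st with
  | nil => exact h
  | cons j L ih => exact ih _ (step_mono a b st j i h)

private lemma foldl_mem (a b : Finset ℕ) (L : List ℕ)
    (st : List ℕ × Finset ℕ × Finset ℕ × List ℕ) (i : ℕ)
    (hi : i ∈ L) (ha : i ∈ a) (hb : i ∈ b) :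
    i ∈ (L.foldl (step a b) st).2.2.1 := by
  induction L generalizing st with
  | nil => cases hi
  | cons j L ih =>
    rcases List.mem_cons.mp hi with rfl | hi'
    · rw [List.foldl_cons]
      apply foldl_mono
      obtain ⟨s1, s2, s3, s4⟩ := st
      unfold step
      simp only [if_pos hb, if_pos ha]
      exact Finset.mem_insert_self _ _
    · exact ih _ hi'

private def Inv (a : Finset ℕ) (st : List ℕ × Finset ℕ × Finset ℕ × List ℕ) : Prop :=
  st.2.2.1 ⊆ a ∧ ∀ x ∈ st.2.2.2, x ∈ a

private lemma step_inv (a b : Finset ℕ) (st : List ℕ × Finset ℕ × Finset ℕ × List ℕ)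
    (j : ℕ) (h : Inv a st) : Inv a (step a b st j) := by
  obtain ⟨s1, s2, s3, s4⟩ := st
  obtain ⟨h1, h2⟩ := h
  simp only [Inv, step] at *
  by_cases hb : j ∈ b <;> by_cases ha : j ∈ a <;>
    simp only [hb, ha, if_true, if_false]
  · exact ⟨Finset.insert_subset ha h1, h2⟩
  · exact ⟨h1, h2⟩
  · cases s1 with
    | nil =>
      refine ⟨h1, fun x hx => ?_⟩
      rcases List.mem_append.mp hx with hx | hx
      · exact h2 x hx
      · simp at hx; subst hx; exact ha
    | cons x rest => exact ⟨Finset.insert_subset ha h1, h2⟩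
  · exact ⟨h1, h2⟩

private lemma foldl_inv (a b : Finset ℕ) (L : List ℕ)
    (st : List ℕ × Finset ℕ × Finset ℕ × List ℕ) (h : Inv a st) :
    Inv a (L.foldl (step a b) st) := by
  induction L generalizing st with
  | nil => exact h
  | cons j L ih => exact ih _ (step_inv a b st j h)

private lemma scan_inv (n : ℕ) (a b : Finset ℕ) : Inv a (scan n a b) := by
  rw [scan_eq]
  exact foldl_inv a b _ _ ⟨Finset.empty_subset a, by simp⟩

private lemma Rcyl_subset (n : ℕ) (a b : Finset ℕ) : Rcyl n a b ⊆ a := by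
  obtain ⟨h1, h2⟩ := scan_inv n a b
  intro x hx
  rcases Finset.mem_union.mp hx with hx | hx
  · exact h1 hx
  · exact h2 x (List.mem_of_mem_take (List.mem_toFinset.mp hx))

private lemma Rtup_subset_head (n : ℕ) (b : Finset ℕ) (l : List (Finset ℕ)) :
    Rtup n (b :: l) ⊆ b := by
  cases l with
  | nil => exact subset_rfl
  | cons c rest => exact Rcyl_subset n b _

private lemma mem_colsList (n i : ℕ) (h1 : 1 ≤ i) (h2 : i ≤ n) : i ∈ colsList n := by
  simp only [colsList, List.mem_map, List.mem_range]
  exact ⟨i - 1, by omega, by omega⟩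

private lemma mem_Rcyl (n : ℕ) (a b : Finset ℕ) (i : ℕ)
    (hi : i ∈ colsList n) (ha : i ∈ a) (hb : i ∈ b) : i ∈ Rcyl n a b := by
  have hmem : i ∈ (scan n a b).2.2.1 := by
    rw [scan_eq]
    exact foldl_mem a b _ _ i hi ha hb
  exact Finset.mem_union_left _ hmem

private lemma botLabel_pos (n : ℕ) (rows : List (Finset ℕ)) (c : ℕ)
    (h : 0 < botLabel n rows c) :
    ∃ k, 1 ≤ k ∧ k ≤ rows.length ∧ c ∈ Rtup n (rows.take k) ∧
      botLabel n rows c = k := by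
  obtain ⟨k, hk, hsup⟩ := Finset.exists_mem_eq_sup (Finset.range (rows.length + 1))
    ⟨0, Finset.mem_range.mpr (Nat.succ_pos _)⟩
    (fun k => if c ∈ Rtup n (rows.take k) then k else 0)
  rw [botLabel] at h ⊢
  rw [hsup] at h ⊢
  split at h
  · rename_i hc
    exact ⟨k, h, by simpa using Nat.lt_succ_iff.mp (Finset.mem_range.mp hk), hc, by simp [hc]⟩
  · omega

private lemma le_botLabel (n : ℕ) (rows : List (Finset ℕ)) (c k : ℕ)
    (hk : k ≤ rows.length) (hc : c ∈ Rtup n (rows.take k)) :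
    k ≤ botLabel n rows c := by
  rw [botLabel]
  simpa [hc] using Finset.le_sup (f := fun k => if c ∈ Rtup n (rows.take k) then k else 0)
    (Finset.mem_range.mpr (Nat.lt_succ_of_le hk))

/-- Let `M` be a multiline queue, `i` a column, and `t ≤ r` rows
with `L_M(s,i) > 0` for all `t ≤ s ≤ r`.  Then the labels weakly increase going
down the column: `L_M(r,i) ≤ L_M(r−1,i) ≤ ⋯ ≤ L_M(t,i)`. -/
theorem statement15 (n : ℕ) (hn : 1 ≤ n) (lam : List ℕ) (hlam : IsPartitionL lam)
    (hlen : lam.length < n) (M : List (Finset ℕ)) (hM : IsMLQ n lam M)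
    (i t r : ℕ) (ht : 1 ≤ t) (htr : t ≤ r)
    (hball : ∀ s : ℕ, t ≤ s → s ≤ r → 0 < labelAt n M s i) :
    ∀ s : ℕ, t ≤ s → s < r → labelAt n M (s + 1) i ≤ labelAt n M s i := by
  intro s hts hsr
  have hs1 : 1 ≤ s := le_trans ht hts
  have h1 : 0 < labelAt n M s i := hball s hts (le_of_lt hsr)
  have h2 : 0 < labelAt n M (s + 1) i := hball (s + 1) (by omega) (by omega)
  -- extract positivity of the botLabels
  have hpos1 : 0 < botLabel n (M.drop (s - 1)) i := by
    rw [labelAt] at h1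
    split at h1
    · rename_i hc; exact hc.2
    · omega
  have hpos2 : 0 < botLabel n (M.drop s) i := by
    rw [labelAt] at h2
    simp only [Nat.add_sub_cancel] at h2
    split at h2
    · rename_i hc; exact hc.2
    · omega
  obtain ⟨K, hK1, hKlen, hKmem, hKval⟩ := botLabel_pos n (M.drop s) i hpos2
  obtain ⟨k', hk'1, hk'len, hk'mem, _⟩ := botLabel_pos n (M.drop (s - 1)) i hpos1
  have hslen : s < M.length := by
    rw [List.length_drop] at hKlen; omega
  have hs1len : s - 1 < M.length := by omega
  -- drop (s-1) = M[s-1] :: drop s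
  have hdrop : M.drop (s - 1) = M[s - 1] :: M.drop s := by
    have he : s - 1 + 1 = s := by omega
    rw [List.drop_eq_getElem_cons hs1len, he]
  -- i is in the row M[s-1]
  have hiB : i ∈ M[s - 1] := by
    have : M.drop (s - 1) ≠ [] := by rw [hdrop]; simp
    have htake : (M.drop (s - 1)).take k' = M[s - 1] :: (M.drop s).take (k' - 1) := by
      rw [hdrop]
      cases k' with
      | zero => omega
      | succ m => simp
    rw [htake] at hk'mem
    exact Rtup_subset_head n _ _ hk'mem
  have hiIcc : i ∈ Finset.Icc 1 n := hM.2.1 _ (List.getElem_mem hs1len) hiB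
  have hicols : i ∈ colsList n := by
    rw [Finset.mem_Icc] at hiIcc
    exact mem_colsList n i hiIcc.1 hiIcc.2
  -- the take-K list on drop s is nonempty
  have hne : (M.drop s).take K ≠ [] := by
    have : M.drop s ≠ [] := by
      intro h; rw [h] at hKlen; simp at hKlen; omega
    cases hds : M.drop s with
    | nil => exact absurd hds this
    | cons c rest =>
      cases K with
      | zero => omega
      | succ m => simp [hds]
  -- membership one level down
  have hmem' : i ∈ Rtup n ((M.drop (s - 1)).take (K + 1)) := by
    have htake : (M.drop (s - 1)).take (K + 1) = M[s - 1] :: (M.drop s).take K := by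
      rw [hdrop]; simp
    rw [htake]
    cases hds : (M.drop s).take K with
    | nil => exact absurd hds hne
    | cons c rest =>
      show i ∈ Rcyl n (M[s - 1]) (Rtup n (c :: rest))
      apply mem_Rcyl n _ _ i hicols hiB
      rw [← hds]
      exact hKmem
  have hlen' : K + 1 ≤ (M.drop (s - 1)).length := by
    rw [List.length_drop] at hKlen ⊢
    omega
  have hle : K + 1 ≤ botLabel n (M.drop (s - 1)) i :=
    le_botLabel n _ i (K + 1) hlen' hmem'
  -- now compute the two labels
  have hL2 : labelAt n M (s + 1) i = K + s := by
    rw [labelAt]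
    simp only [Nat.add_sub_cancel]
    rw [if_pos ⟨by omega, hpos2⟩, hKval]
  have hL1 : labelAt n M s i = botLabel n (M.drop (s - 1)) i + (s - 1) := by
    rw [labelAt, if_pos ⟨hs1, hpos1⟩]
  rw [hL1, hL2]
  omega

end MultilineQueue
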